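/- Soundness of Σ_D(CS) over regular jstit frames: let CS be a constant specification and let A ∈ Form^Ag with ⊢_CS A. Then A is valid in every model in Mod_CS(𝓕^Ag_reg), i.e. in every CS-normal jstit model based on a regular jstit frame for Ag. -/

import Mathlib

/-! Preliminaries: temporal frames, stit frames, jstit frames, the language of
JA-STIT, jstit models, satisfaction, and the Hilbert system Σ_D(CS). -/

/-- A temporal frame: a nonempty set of moments with a partial order satisfying
historical connection and no backward branching. -/
structure TemporalFrame (Mo : Type) : Type where
  le : Mo → Mo → Prop
  le_refl : ∀ m, le m m
  le_antisymm : ∀ {m m'}, le m m' → le m' m → m = m'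
  le_trans : ∀ {m1 m2 m3}, le m1 m2 → le m2 m3 → le m1 m3
  nonempty : Nonempty Mo
  hist_conn : ∀ m m1, ∃ m2, le m2 m ∧ le m2 m1
  no_backward : ∀ m m1 m2, le m1 m → le m2 m → le m1 m2 ∨ le m2 m1

namespace TemporalFrame

variable {Mo : Type} (T : TemporalFrame Mo)

/-- The strict companion of the temporal order. -/
def lt (m m' : Mo) : Prop := T.le m m' ∧ m ≠ m'

/-- A history is a maximal chain of moments w.r.t. the temporal order. -/
def IsHistory (h : Set Mo) : Prop :=
  IsChain T.le h ∧ ∀ h' : Set Mo, IsChain T.le h' → h ⊆ h' → h' = h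

/-- `T.H m` is the set of histories passing through the moment `m`. -/
def H (m : Mo) : Set (Set Mo) := { h | T.IsHistory h ∧ m ∈ h }

/-- Histories `h` and `g` are undivided at `m`. -/
def Undiv (m : Mo) (h g : Set Mo) : Prop := ∃ m', T.lt m m' ∧ m' ∈ h ∧ m' ∈ g

/-- `m'` is an immediate successor of `m`. -/
def Next (m m' : Mo) : Prop := T.lt m m' ∧ ∀ m'', T.lt m'' m' → T.le m'' m

/-- Mixed successor condition on (the temporal part of) a frame. -/
def MixSucc : Prop :=
  ∀ m m1 : Mo,
    (T.lt m m1 → ∃ m2, T.le m2 m1 ∧ T.Next m m2) ∨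
    (∀ h ∈ T.H m, ∀ g ∈ T.H m, T.Undiv m h g)

end TemporalFrame

/-- A stit frame for an agent community `Ag`: a temporal frame together with a choice
function assigning to each moment and agent a partition of the histories through that
moment, subject to no choice between undivided histories and independence of agents. -/
structure StitFrame (Mo : Type) (Ag : Type) extends TemporalFrame Mo where
  choice : Mo → Ag → Set (Set (Set Mo))
  choice_cell_nonempty : ∀ m j C, C ∈ choice m j → C.Nonempty
  choice_cell_sub : ∀ m j C, C ∈ choice m j → C ⊆ toTemporalFrame.H m
  choice_cover : ∀ m j h, h ∈ toTemporalFrame.H m → ∃ C ∈ choice m j, h ∈ C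
  choice_disjoint : ∀ m j C C', C ∈ choice m j → C' ∈ choice m j →
    (C ∩ C').Nonempty → C = C'
  no_choice_undiv : ∀ m j h h', h ∈ toTemporalFrame.H m → h' ∈ toTemporalFrame.H m →
    toTemporalFrame.Undiv m h h' → ∀ C ∈ choice m j, h ∈ C → h' ∈ C
  independence : ∀ m (f : Ag → Set (Set Mo)), (∀ j, f j ∈ choice m j) →
    (⋂ j, f j).Nonempty

/-- A justification stit (jstit) frame for `Ag`: a stit frame together with two
epistemic preorders `R ⊆ R_e`, with the temporal order included in `R`. -/
structure JstitFrame (Mo : Type) (Ag : Type) extends StitFrame Mo Ag where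
  R : Mo → Mo → Prop
  Re : Mo → Mo → Prop
  R_refl : ∀ m, R m m
  R_trans : ∀ {m1 m2 m3}, R m1 m2 → R m2 m3 → R m1 m3
  Re_refl : ∀ m, Re m m
  Re_trans : ∀ {m1 m2 m3}, Re m1 m2 → Re m2 m3 → Re m1 m3
  R_sub_Re : ∀ {m m'}, R m m' → Re m m'
  le_sub_R : ∀ {m m'}, le m m' → R m m'

namespace JstitFrame

variable {Mo : Type} {Ag : Type} (F : JstitFrame Mo Ag)

/-- The family `Θ_m` of subsets of the set of moments associated with a moment `m`. -/
def Theta (m : Mo) : Set (Set Mo) :=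
  { S | m ∈ S ∧
    (∀ m1 m2, m1 ∈ S → F.Re m1 m2 → m2 ∈ S) ∧
    (∀ m1, (∀ h ∈ F.toTemporalFrame.H m1,
        ∃ m2 ∈ h, F.toTemporalFrame.Next m1 m2 ∧ m2 ∈ S) → m1 ∈ S) ∧
    (∀ m1, m1 ∈ S →
      (∀ m2, F.toTemporalFrame.lt m2 m1 →
        ∃ m3, F.toTemporalFrame.lt m2 m3 ∧ F.toTemporalFrame.lt m3 m1) →
      ∃ m4, F.toTemporalFrame.lt m4 m1 ∧ m4 ∈ S) }

/-- A jstit frame is unirelational iff `R_e ⊆ R`. -/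
def Unirelational : Prop := ∀ m m', F.Re m m' → F.R m m'

/-- Regularity of a jstit frame. -/
def Regular : Prop :=
  ∀ m m1 : Mo, F.toTemporalFrame.lt m m1 →
    (∃ S : Set Mo,
      (∀ m0, F.toTemporalFrame.lt m m0 → F.le m0 m1 → S ∈ F.Theta m0) ∧
      m ∉ S ∧
      ∃ h' ∈ F.toTemporalFrame.H m,
        (∀ g ∈ F.toTemporalFrame.H m1, ¬ F.toTemporalFrame.Undiv m h' g) ∧
        (∀ m' ∈ h', F.toTemporalFrame.Next m m' → m' ∉ S)) →
    ∃ m2, F.le m2 m1 ∧ F.toTemporalFrame.Next m m2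

end JstitFrame

/-- Proof polynomials over proof variables `PVar` and proof constants `PConst`. -/
inductive Pol (PVar PConst : Type) : Type
  | var : PVar → Pol PVar PConst
  | const : PConst → Pol PVar PConst
  | plus : Pol PVar PConst → Pol PVar PConst → Pol PVar PConst
  | times : Pol PVar PConst → Pol PVar PConst → Pol PVar PConst
  | bang : Pol PVar PConst → Pol PVar PConst

/-- Formulas of JA-STIT. -/
inductive Form (Ag PVar PConst PropVar : Type) : Type
  | pv : PropVar → Form Ag PVar PConst PropVar
  | and : Form Ag PVar PConst PropVar → Form Ag PVar PConst PropVar →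
      Form Ag PVar PConst PropVar
  | neg : Form Ag PVar PConst PropVar → Form Ag PVar PConst PropVar
  | stit : Ag → Form Ag PVar PConst PropVar → Form Ag PVar PConst PropVar
  | box : Form Ag PVar PConst PropVar → Form Ag PVar PConst PropVar
  | proves : Pol PVar PConst → Form Ag PVar PConst PropVar → Form Ag PVar PConst PropVar
  | know : Form Ag PVar PConst PropVar → Form Ag PVar PConst PropVar
  | ann : Pol PVar PConst → Form Ag PVar PConst PropVar

namespace Form

variable {Ag PVar PConst PropVar : Type}

/-- Implication, defined as usual from `¬` and `∧`. -/
def imp (A B : Form Ag PVar PConst PropVar) : Form Ag PVar PConst PropVar :=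
  neg (and A (neg B))

/-- Disjunction, defined as usual. -/
def or (A B : Form Ag PVar PConst PropVar) : Form Ag PVar PConst PropVar :=
  neg (and (neg A) (neg B))

/-- The dual `◇` of the historical necessity modality. -/
def dia (A : Form Ag PVar PConst PropVar) : Form Ag PVar PConst PropVar :=
  neg (box (neg A))

/-- Falsum, defined as usual. -/
def bot [Inhabited PropVar] : Form Ag PVar PConst PropVar :=
  and (pv default) (neg (pv default))

end Form

/-- Conjunction of a nonempty list of formulas (head plus tail). -/
def andList {Ag PVar PConst PropVar : Type} :
    Form Ag PVar PConst PropVar → List (Form Ag PVar PConst PropVar) →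
      Form Ag PVar PConst PropVar
  | A, [] => A
  | A, B :: L => Form.and A (andList B L)

/-- Disjunction of a list of formulas. -/
def bigOr {Ag PVar PConst PropVar : Type} [Inhabited PropVar] :
    List (Form Ag PVar PConst PropVar) → Form Ag PVar PConst PropVar
  | [] => Form.bot
  | [A] => A
  | A :: B :: L => Form.or A (bigOr (B :: L))

/-- A classical propositional tautology: a formula true under every Boolean valuation
commuting with `∧` and `¬` (all other formulas being treated as atoms). -/
def Tautology {Ag PVar PConst PropVar : Type} (A : Form Ag PVar PConst PropVar) : Prop :=
  ∀ v : Form Ag PVar PConst PropVar → Bool,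
    (∀ B C, v (Form.and B C) = (v B && v C)) →
    (∀ B, v (Form.neg B) = !v B) →
    v A = true

/-- The axiom schemes (A0)–(A9) of Σ_D. -/
inductive Ax {Ag PVar PConst PropVar : Type} : Form Ag PVar PConst PropVar → Prop
  -- (A0) classical propositional tautologies
  | a0 {A} : Tautology A → Ax A
  -- (A1) S5 axioms for □
  | boxK {A B} : Ax (Form.imp (Form.box (Form.imp A B))
      (Form.imp (Form.box A) (Form.box B)))
  | boxT {A} : Ax (Form.imp (Form.box A) A)
  | box4 {A} : Ax (Form.imp (Form.box A) (Form.box (Form.box A)))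
  | box5 {A} : Ax (Form.imp (Form.neg (Form.box A)) (Form.box (Form.neg (Form.box A))))
  -- (A1) S5 axioms for each [j]
  | stitK {j : Ag} {A B} : Ax (Form.imp (Form.stit j (Form.imp A B))
      (Form.imp (Form.stit j A) (Form.stit j B)))
  | stitT {j : Ag} {A} : Ax (Form.imp (Form.stit j A) A)
  | stit4 {j : Ag} {A} : Ax (Form.imp (Form.stit j A) (Form.stit j (Form.stit j A)))
  | stit5 {j : Ag} {A} : Ax (Form.imp (Form.neg (Form.stit j A))
      (Form.stit j (Form.neg (Form.stit j A))))
  -- (A2)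
  | a2 {j : Ag} {A} : Ax (Form.imp (Form.box A) (Form.stit j A))
  -- (A3), for pairwise distinct agents
  | a3 {p : Ag × Form Ag PVar PConst PropVar} {L : List (Ag × Form Ag PVar PConst PropVar)} :
      (((p :: L).map Prod.fst).Nodup) →
      Ax (Form.imp
        (andList (Form.dia (Form.stit p.1 p.2)) (L.map fun q => Form.dia (Form.stit q.1 q.2)))
        (Form.dia (andList (Form.stit p.1 p.2) (L.map fun q => Form.stit q.1 q.2))))
  -- (A4)
  | a4 {s t : Pol PVar PConst} {A B} : Ax (Form.imp (Form.proves s (Form.imp A B))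
      (Form.imp (Form.proves t A) (Form.proves (Pol.times s t) B)))
  -- (A5)
  | a5 {t : Pol PVar PConst} {A} : Ax (Form.imp (Form.proves t A)
      (Form.and (Form.proves (Pol.bang t) (Form.proves t A)) (Form.know A)))
  -- (A6)
  | a6 {s t : Pol PVar PConst} {A} : Ax (Form.imp
      (Form.or (Form.proves s A) (Form.proves t A)) (Form.proves (Pol.plus s t) A))
  -- (A7) S4 axioms for K
  | knowK {A B} : Ax (Form.imp (Form.know (Form.imp A B))
      (Form.imp (Form.know A) (Form.know B)))
  | knowT {A} : Ax (Form.imp (Form.know A) A)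
  | know4 {A} : Ax (Form.imp (Form.know A) (Form.know (Form.know A)))
  -- (A8)
  | a8 {A} : Ax (Form.imp (Form.know A) (Form.box (Form.know (Form.box A))))
  -- (A9)
  | a9 {t : Pol PVar PConst} : Ax (Form.imp (Form.box (Form.ann t))
      (Form.know (Form.box (Form.ann t))))

/-- Iterated prefixes `c_n : … : c_1 : A` of instances `A` of the axiom schemes. -/
inductive ConstIter {Ag PVar PConst PropVar : Type} : Form Ag PVar PConst PropVar → Prop
  | base {c : PConst} {A} : Ax A → ConstIter (Form.proves (Pol.const c) A)
  | step {c : PConst} {B} : ConstIter B → ConstIter (Form.proves (Pol.const c) B)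

/-- A constant specification: a set of formulas of the form `c_n : … : c_1 : A` with `A`
an instance of (A0)–(A9), closed under deleting the outermost constant. -/
def IsConstSpec {Ag PVar PConst PropVar : Type}
    (CS : Set (Form Ag PVar PConst PropVar)) : Prop :=
  (∀ B ∈ CS, ConstIter B) ∧
  ∀ (c c' : PConst) (B : Form Ag PVar PConst PropVar),
    Form.proves (Pol.const c) (Form.proves (Pol.const c') B) ∈ CS →
    Form.proves (Pol.const c') B ∈ CS

/-- Provability in Σ_D(CS): axioms (A0)–(A9), modus ponens (R1), K-necessitation (R2),
the rule (R_D) and the rule (R_CS). -/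
inductive Proves {Ag PVar PConst PropVar : Type} [Inhabited PropVar]
    (CS : Set (Form Ag PVar PConst PropVar)) : Form Ag PVar PConst PropVar → Prop
  | ax {A} : Ax A → Proves CS A
  | mp {A B} : Proves CS (Form.imp A B) → Proves CS A → Proves CS B
  | nec {A} : Proves CS A → Proves CS (Form.know A)
  | rd {A : Form Ag PVar PConst PropVar} {ts ss : List (Pol PVar PConst)}
      (hne : ts ++ ss ≠ []) :
      Proves CS (Form.imp (Form.know A)
        (bigOr ((ts.map fun t => Form.neg (Form.box (Form.ann t))) ++
                (ss.map fun s => Form.box (Form.ann s))))) →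
      Proves CS (Form.imp (Form.know A)
        (bigOr ((ts.map fun t => Form.neg (Form.ann t)) ++
                (ss.map fun s => Form.ann s))))
  | rcs {B} : B ∈ CS → Proves CS B

/-- Γ is consistent in Σ_D(CS): no finite nonempty conjunction of members of Γ provably
implies falsum. -/
def CSConsistent {Ag PVar PConst PropVar : Type} [Inhabited PropVar]
    (CS Γ : Set (Form Ag PVar PConst PropVar)) : Prop :=
  ¬ ∃ (A : Form Ag PVar PConst PropVar) (L : List (Form Ag PVar PConst PropVar)),
      A ∈ Γ ∧ (∀ B ∈ L, B ∈ Γ) ∧ Proves CS (Form.imp (andList A L) Form.bot)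

/-- A jstit model for `Ag`: a jstit frame together with `Act`, an admissible evidence
function `E` and an evaluation `V`, subject to the semantical constraints. -/
structure JstitModel (Mo : Type) (Ag PVar PConst PropVar : Type)
    extends JstitFrame Mo Ag where
  act : Mo → Set Mo → Set (Pol PVar PConst)
  ev : Mo → Pol PVar PConst → Set (Form Ag PVar PConst PropVar)
  val : PropVar → Set (Mo × Set Mo)
  -- monotonicity of evidence
  ev_mono : ∀ m m' t, Re m m' → ev m t ⊆ ev m' t
  -- evidence closure properties
  ev_app : ∀ m s t A B, Form.imp A B ∈ ev m s → A ∈ ev m t → B ∈ ev m (Pol.times s t)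
  ev_sum_left : ∀ m s t, ev m s ⊆ ev m (Pol.plus s t)
  ev_sum_right : ∀ m s t, ev m t ⊆ ev m (Pol.plus s t)
  ev_bang : ∀ m t A, A ∈ ev m t → Form.proves t A ∈ ev m (Pol.bang t)
  -- expansion of presented proofs
  expansion : ∀ m m' h, toTemporalFrame.lt m' m → h ∈ toTemporalFrame.H m →
    act m' h ⊆ act m h
  -- no new proofs guaranteed
  no_new : ∀ m t, (∀ h ∈ toTemporalFrame.H m, t ∈ act m h) →
    ∃ m' h, toTemporalFrame.lt m' m ∧ h ∈ toTemporalFrame.H m ∧ t ∈ act m' h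
  -- presenting a new proof makes histories divide
  divide : ∀ m h h', h ∈ toTemporalFrame.H m → h' ∈ toTemporalFrame.H m →
    toTemporalFrame.Undiv m h h' → act m h = act m h'
  -- presented proofs are epistemically transparent
  transparent : ∀ m m' t, Re m m' → (∀ h ∈ toTemporalFrame.H m, t ∈ act m h) →
    ∀ h' ∈ toTemporalFrame.H m', t ∈ act m' h'

namespace JstitModel

variable {Mo Ag PVar PConst PropVar : Type}

/-- `Act_m`, the set of proofs presented at `m` under every history through `m`. -/
def ActM (M : JstitModel Mo Ag PVar PConst PropVar) (m : Mo) : Set (Pol PVar PConst) :=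
  { t | ∀ h ∈ M.toTemporalFrame.H m, t ∈ M.act m h }

/-- The satisfaction relation for jstit models. -/
def Sat (M : JstitModel Mo Ag PVar PConst PropVar) :
    Form Ag PVar PConst PropVar → Mo → Set Mo → Prop
  | Form.pv p, m, h => (m, h) ∈ M.val p
  | Form.and A B, m, h => M.Sat A m h ∧ M.Sat B m h
  | Form.neg A, m, h => ¬ M.Sat A m h
  | Form.stit j A, m, h => ∀ h' C, C ∈ M.choice m j → h ∈ C → h' ∈ C → M.Sat A m h'
  | Form.box A, m, _ => ∀ h' ∈ M.toTemporalFrame.H m, M.Sat A m h'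
  | Form.know A, m, _ => ∀ m' h', M.R m m' → h' ∈ M.toTemporalFrame.H m' → M.Sat A m' h'
  | Form.proves t A, m, _ => A ∈ M.ev m t ∧
      ∀ m' h', M.Re m m' → h' ∈ M.toTemporalFrame.H m' → M.Sat A m' h'
  | Form.ann t, m, h => t ∈ M.act m h

/-- Validity of a formula in a jstit model. -/
def Valid (M : JstitModel Mo Ag PVar PConst PropVar)
    (A : Form Ag PVar PConst PropVar) : Prop :=
  ∀ m h, h ∈ M.toTemporalFrame.H m → M.Sat A m h

end JstitModel

/-- CS-normality of a jstit model. -/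
def CSNormal {Mo Ag PVar PConst PropVar : Type}
    (CS : Set (Form Ag PVar PConst PropVar))
    (M : JstitModel Mo Ag PVar PConst PropVar) : Prop :=
  ∀ (c : PConst) (m : Mo) (A : Form Ag PVar PConst PropVar),
    Form.proves (Pol.const c) A ∈ CS → A ∈ M.ev m (Pol.const c)


/-! Soundness is checked rule by rule. The axioms hold in every jstit model, (A3) by
independence of agents and (A9) by epistemic transparency. The only delicate case is (R_D). Suppose `K A` holds at `(m, h)`, every
`E tᵢ` holds and every `E sⱼ` fails there, while some `tᵢ` is not presented at `m` on a history
`g`; then `g` is divided from `h` at `m`. If `h` continues past `m`, the set of moments at which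
all `tᵢ` are presented on every history belongs to `Θ_{m₀}` for every `m₀` strictly between `m`
and a later moment `m₁` of `h` (clause (4) via "no new proofs guaranteed"), so regularity gives
an immediate successor `m₂` of `m` on `h`. At `m₂` every `tᵢ` is presented on every history, and
no `sⱼ` is, since a proof presented at an immediate successor on every history was already
presented at `m` on `h`; this contradicts the premise of (R_D) at the `R`-successor `m₂`.
If `h` does not continue past `m`, it is the only history through `m`, so `g = h`. -/

namespace TemporalFrame

variable {Mo : Type} (T : TemporalFrame Mo)

instance : Std.Refl T.le := ⟨T.le_refl⟩

variable {T}

namespace IsHistory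

variable {h : Set Mo}

lemma mem_of_forall_comparable (hh : T.IsHistory h) {a : Mo}
    (ha : ∀ b ∈ h, T.le a b ∨ T.le b a) : a ∈ h := by
  rw [← hh.2 _ (hh.1.insert fun b hb _ => ha b hb) (Set.subset_insert a h)]
  exact Set.mem_insert a h

lemma mem_of_le (hh : T.IsHistory h) {m m' : Mo} (hm : m ∈ h) (hle : T.le m' m) :
    m' ∈ h :=
  hh.mem_of_forall_comparable fun b hb =>
    (hh.1.total hb hm).elim (T.no_backward m m' b hle) fun hmb => Or.inl (T.le_trans hle hmb)

end IsHistory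

lemma mem_H_of_le {h : Set Mo} {m m' : Mo} (hh : h ∈ T.H m) (hle : T.le m' m) :
    h ∈ T.H m' :=
  ⟨hh.1, hh.1.mem_of_le hh.2 hle⟩

lemma Undiv.trans {m : Mo} {h g k : Set Mo} (hh : T.IsHistory h) (hg : T.IsHistory g)
    (hk : T.IsHistory k) (hhg : T.Undiv m h g) (hgk : T.Undiv m g k) : T.Undiv m h k := by
  obtain ⟨a, hma, hah, hag⟩ := hhg
  obtain ⟨b, hmb, hbg, hbk⟩ := hgk
  rcases hg.1.total hag hbg with hab | hba
  · exact ⟨a, hma, hah, hk.mem_of_le hbk hab⟩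
  · exact ⟨b, hmb, hh.mem_of_le hah hba, hbk⟩

lemma eq_of_forall_not_lt {m : Mo} {h g : Set Mo} (hh : h ∈ T.H m)
    (hmax : ∀ m1 ∈ h, ¬ T.lt m m1) (hg : g ∈ T.H m) : g = h := by
  have le_of_mem : ∀ b ∈ h, T.le b m := fun b hb =>
    (hh.1.1.total hb hh.2).elim id fun hmb => by
      by_cases hbm : b = m
      · exact hbm ▸ T.le_refl b
      · exact absurd ⟨hmb, Ne.symm hbm⟩ (hmax b hb)
  have eq_of_ge : ∀ x, T.le m x → x = m := fun x hmx => by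
    have hx : x ∈ h := hh.1.mem_of_forall_comparable fun b hb =>
      Or.inr (T.le_trans (le_of_mem b hb) hmx)
    by_contra hxm
    exact hmax x hx ⟨hmx, Ne.symm hxm⟩
  have hgh : g ⊆ h := fun x hx =>
    (hg.1.1.total hx hg.2).elim (hh.1.mem_of_le hh.2) fun hmx => eq_of_ge x hmx ▸ hh.2
  exact (hg.1.2 h hh.1.1 hgh).symm

lemma exists_lt_forall_mem {ι : Type} {m0 m1 : Mo} (P : ι → Mo → Prop)
    (hP : ∀ i m' m'', P i m' → T.le m' m'' → T.lt m'' m1 → P i m'') (h0 : T.lt m0 m1) :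
    ∀ l : List ι, (∀ i ∈ l, ∃ m', T.lt m' m1 ∧ P i m') → ∃ m', T.lt m' m1 ∧ ∀ i ∈ l, P i m'
  | [], _ => ⟨m0, h0, by simp⟩
  | i :: l, hl => by
    obtain ⟨a, ha, hPa⟩ := hl i List.mem_cons_self
    obtain ⟨b, hb, hPb⟩ :=
      exists_lt_forall_mem P hP h0 l fun j hj => hl j (List.mem_cons_of_mem i hj)
    rcases T.no_backward m1 a b ha.1 hb.1 with hab | hba
    · exact ⟨b, hb, List.forall_mem_cons.2 ⟨hP i a b hPa hab hb, hPb⟩⟩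
    · exact ⟨a, ha, List.forall_mem_cons.2 ⟨hPa, fun j hj => hP j b a (hPb j hj) hba ha⟩⟩

end TemporalFrame

namespace JstitModel

variable {Mo Ag PVar PConst PropVar : Type} (M : JstitModel Mo Ag PVar PConst PropVar)

lemma act_subset_of_le {m m' : Mo} {h : Set Mo} (hle : M.le m' m) (hh : h ∈ M.H m) :
    M.act m' h ⊆ M.act m h := by
  by_cases hm : m' = m
  · exact hm ▸ subset_rfl
  · exact M.expansion m m' h ⟨hle, hm⟩ hh

/-- All histories through `m` are undivided at `m'`. -/
lemma mem_ActM_of_lt {m m' : Mo} {g : Set Mo} {t : Pol PVar PConst} (hlt : M.lt m' m)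
    (hg : g ∈ M.H m) (ht : t ∈ M.act m' g) : t ∈ M.ActM m := fun g' hg' =>
  M.expansion m m' g' hlt hg' <| by
    rwa [← M.divide m' g g' (TemporalFrame.mem_H_of_le hg hlt.1)
      (TemporalFrame.mem_H_of_le hg' hlt.1) ⟨m, hlt, hg.2, hg'.2⟩]

lemma mem_act_of_next {m m2 : Mo} {h : Set Mo} {t : Pol PVar PConst} (hh : h ∈ M.H m)
    (hnx : M.Next m m2) (hm2 : m2 ∈ h) (ht : t ∈ M.ActM m2) : t ∈ M.act m h := by
  obtain ⟨m', g, hlt, hg, htg⟩ := M.no_new m2 t ht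
  have hgm : g ∈ M.H m := TemporalFrame.mem_H_of_le hg hnx.1.1
  rw [← M.divide m g h hgm hh ⟨m2, hnx.1, hg.2, hm2⟩]
  exact M.act_subset_of_le (hnx.2 m' hlt) hgm htg

variable {M} {m : Mo} {h : Set Mo}

lemma sat_imp {A B : Form Ag PVar PConst PropVar} :
    M.Sat (Form.imp A B) m h ↔ (M.Sat A m h → M.Sat B m h) := by
  simp only [Form.imp, Sat]; tauto

lemma sat_or {A B : Form Ag PVar PConst PropVar} :
    M.Sat (Form.or A B) m h ↔ (M.Sat A m h ∨ M.Sat B m h) := by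
  simp only [Form.or, Sat]; tauto

lemma sat_dia {A : Form Ag PVar PConst PropVar} :
    M.Sat (Form.dia A) m h ↔ ∃ h' ∈ M.H m, M.Sat A m h' := by
  simp only [Form.dia, Sat, not_forall, exists_prop, not_not]

lemma sat_andList (A : Form Ag PVar PConst PropVar) (L : List (Form Ag PVar PConst PropVar)) :
    M.Sat (andList A L) m h ↔ M.Sat A m h ∧ ∀ B ∈ L, M.Sat B m h := by
  induction L generalizing A with
  | nil => simp [andList]
  | cons B L ih => simp only [andList, Sat, ih, List.forall_mem_cons]

lemma sat_bigOr [Inhabited PropVar] :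
    ∀ L : List (Form Ag PVar PConst PropVar), M.Sat (bigOr L) m h ↔ ∃ B ∈ L, M.Sat B m h
  | [] => by simp [bigOr, Form.bot, Sat]
  | [A] => by simp [bigOr]
  | A :: B :: L => by
    rw [bigOr, sat_or, sat_bigOr (B :: L)]
    exact (List.exists_mem_cons_iff (M.Sat · m h) A (B :: L)).symm

lemma sat_of_tautology {A : Form Ag PVar PConst PropVar} (hA : Tautology A) : M.Sat A m h := by
  classical
  simpa using hA (fun B => decide (M.Sat B m h)) (fun _ _ => Bool.eq_iff_iff.2 (by simp only [Bool.and_eq_true, decide_eq_true_eq]; rfl))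
    (fun _ => Bool.eq_iff_iff.2 (by simp only [Bool.not_eq_true', decide_eq_true_eq, decide_eq_false_iff_not]; rfl))

lemma sat_andList_map {α : Type} (f : α → Form Ag PVar PConst PropVar) (a : α) (l : List α) :
    M.Sat (andList (f a) (l.map f)) m h ↔ ∀ x ∈ a :: l, M.Sat (f x) m h := by
  simp [sat_andList]

lemma sat_stit_of_mem_cell {j : Ag} {A : Form Ag PVar PConst PropVar} {C : Set (Set Mo)}
    {h' : Set Mo} (hC : C ∈ M.choice m j) (hh : h ∈ C) (hh' : h' ∈ C)
    (hA : M.Sat (Form.stit j A) m h) : M.Sat (Form.stit j A) m h' :=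
  fun h'' C' hC' hh'C' hh''C' =>
    hA h'' C hC hh (M.choice_disjoint m j C' C hC' hC ⟨h', hh'C', hh'⟩ ▸ hh''C')

variable (M) in
lemma exists_mem_H_forall_same_cell [Nonempty Ag] (hist : Ag → Set Mo)
    (hhist : ∀ j, hist j ∈ M.H m) :
    ∃ h' ∈ M.H m, ∀ j, ∃ C ∈ M.choice m j, hist j ∈ C ∧ h' ∈ C := by
  choose C hC hmem using fun j => M.choice_cover m j (hist j) (hhist j)
  obtain ⟨h', hh'⟩ := M.independence m C hC
  rw [Set.mem_iInter] at hh'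
  let j₀ : Ag := Classical.arbitrary Ag
  exact ⟨h', M.choice_cell_sub m j₀ _ (hC j₀) (hh' j₀), fun j => ⟨C j, hC j, hmem j, hh' j⟩⟩

lemma exists_sat_stit_of_nodup (p : Ag × Form Ag PVar PConst PropVar)
    (L : List (Ag × Form Ag PVar PConst PropVar)) (hnd : ((p :: L).map Prod.fst).Nodup)
    (hh : h ∈ M.H m) (hpos : ∀ q ∈ p :: L, ∃ g ∈ M.H m, M.Sat (Form.stit q.1 q.2) m g) :
    ∃ g ∈ M.H m, ∀ q ∈ p :: L, M.Sat (Form.stit q.1 q.2) m g := by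
  have hagent : ∀ j, ∃ g ∈ M.H m, ∀ q ∈ p :: L, q.1 = j → M.Sat (Form.stit j q.2) m g := by
    intro j
    by_cases hj : ∃ q ∈ p :: L, q.1 = j
    · obtain ⟨q, hq, rfl⟩ := hj
      obtain ⟨g, hg, hsat⟩ := hpos q hq
      exact ⟨g, hg, fun q' hq' hq'q => List.inj_on_of_nodup_map hnd hq' hq hq'q ▸ hsat⟩
    · exact ⟨h, hh, fun q hq hqj => (hj ⟨q, hq, hqj⟩).elim⟩
  choose hist hhist hsat using hagent
  have : Nonempty Ag := ⟨p.1⟩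
  obtain ⟨g, hg, hcell⟩ := M.exists_mem_H_forall_same_cell hist hhist
  refine ⟨g, hg, fun q hq => ?_⟩
  obtain ⟨C, hC, hhistC, hgC⟩ := hcell q.1
  exact sat_stit_of_mem_cell hC hhistC hgC (hsat q.1 q hq rfl)

lemma sat_of_ax {A : Form Ag PVar PConst PropVar} (hA : Ax A) (hh : h ∈ M.H m) :
    M.Sat A m h := by
  cases hA with
  | a0 hA => exact sat_of_tautology hA
  | boxK =>
    exact sat_imp.2 fun hAB => sat_imp.2 fun hA h' hh' => sat_imp.1 (hAB h' hh') (hA h' hh')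
  | boxT => exact sat_imp.2 fun hA => hA h hh
  | box4 => exact sat_imp.2 fun hA _ _ => hA
  | box5 => exact sat_imp.2 fun hA _ _ => hA
  | stitK =>
    exact sat_imp.2 fun hAB => sat_imp.2 fun hA h' C hC hhC hh'C =>
      sat_imp.1 (hAB h' C hC hhC hh'C) (hA h' C hC hhC hh'C)
  | @stitT j =>
    obtain ⟨C, hC, hhC⟩ := M.choice_cover m j h hh
    exact sat_imp.2 fun hA => hA h C hC hhC hhC
  | stit4 => exact sat_imp.2 fun hA _ C hC hhC hh'C => sat_stit_of_mem_cell hC hhC hh'C hA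
  | stit5 =>
    exact sat_imp.2 fun hA _ C hC hhC hh'C hA' => hA (sat_stit_of_mem_cell hC hh'C hhC hA')
  | a2 => exact sat_imp.2 fun hA h' C hC _ hh'C => hA h' (M.choice_cell_sub m _ C hC hh'C)
  | @a3 p L hnd =>
    refine sat_imp.2 fun hpos => sat_dia.2 ?_
    have hpos := (sat_andList_map (fun q : Ag × _ => (Form.stit q.1 q.2).dia) p L).1 hpos
    obtain ⟨g, hg, hsat⟩ := exists_sat_stit_of_nodup p L hnd hh fun q hq => sat_dia.1 (hpos q hq)
    exact ⟨g, hg, (sat_andList_map (fun q : Ag × _ => Form.stit q.1 q.2) p L).2 hsat⟩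
  | @a4 s t A B =>
    exact sat_imp.2 fun hAB => sat_imp.2 fun hA =>
      ⟨M.ev_app m s t A B hAB.1 hA.1, fun m' h' hRe hh' =>
        sat_imp.1 (hAB.2 m' h' hRe hh') (hA.2 m' h' hRe hh')⟩
  | @a5 t A =>
    exact sat_imp.2 fun hA =>
      ⟨⟨M.ev_bang m t A hA.1, fun m' _ hRe _ =>
        ⟨M.ev_mono m m' t hRe hA.1, fun m'' h'' hRe' => hA.2 m'' h'' (M.Re_trans hRe hRe')⟩⟩,
        fun m' h' hR => hA.2 m' h' (M.R_sub_Re hR)⟩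
  | @a6 s t A =>
    exact sat_imp.2 fun hst => (sat_or.1 hst).elim
      (fun hs => ⟨M.ev_sum_left m s t hs.1, hs.2⟩) (fun ht => ⟨M.ev_sum_right m s t ht.1, ht.2⟩)
  | knowK =>
    exact sat_imp.2 fun hAB => sat_imp.2 fun hA m' h' hR hh' =>
      sat_imp.1 (hAB m' h' hR hh') (hA m' h' hR hh')
  | knowT => exact sat_imp.2 fun hA => hA m h (M.R_refl m) hh
  | know4 => exact sat_imp.2 fun hA _ _ hR _ m'' h'' hR' => hA m'' h'' (M.R_trans hR hR')
  | a8 => exact sat_imp.2 fun hA _ _ m' _ hR _ h'' => hA m' h'' hR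
  | @a9 t => exact sat_imp.2 fun ht m' _ hR _ => M.transparent m m' t (M.R_sub_Re hR) ht

variable (M) in
def presentsAll (ts : List (Pol PVar PConst)) : Set Mo := {m | ∀ t ∈ ts, t ∈ M.ActM m}

lemma presentsAll_mem_Theta {ts : List (Pol PVar PConst)} (hne : ts ≠ []) {m0 : Mo}
    (hm0 : m0 ∈ M.presentsAll ts) : M.presentsAll ts ∈ M.toJstitFrame.Theta m0 := by
  refine ⟨hm0, fun m1 m2 hm1 hRe t ht => M.transparent m1 m2 t hRe (hm1 t ht),
    fun m1 hnext t ht g hg => ?_, fun m1 hm1 hdense => ?_⟩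
  · obtain ⟨m2, hm2g, hnx, hm2⟩ := hnext g hg
    exact M.mem_act_of_next hg hnx hm2g (hm2 t ht)
  · obtain ⟨t0, ht0⟩ := List.exists_mem_of_ne_nil ts hne
    obtain ⟨m0', -, hlt0, -⟩ := M.no_new m1 t0 (hm1 t0 ht0)
    obtain ⟨m', hlt', hpres⟩ := TemporalFrame.exists_lt_forall_mem
      (fun t m' => ∃ g ∈ M.H m1, t ∈ M.act m' g)
      (fun _ _ _ ⟨g, hg, htg⟩ hle hlt =>
        ⟨g, hg, M.act_subset_of_le hle (TemporalFrame.mem_H_of_le hg hlt.1) htg⟩)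
      hlt0 ts fun t ht =>
        let ⟨a, g, ha, hg, htg⟩ := M.no_new m1 t (hm1 t ht)
        ⟨a, ha, g, hg, htg⟩
    obtain ⟨m4, hlt4, hlt4'⟩ := hdense m' hlt'
    refine ⟨m4, hlt4', fun t ht => ?_⟩
    obtain ⟨g, hg, htg⟩ := hpres t ht
    exact M.mem_ActM_of_lt hlt4 (TemporalFrame.mem_H_of_le hg hlt4'.1) htg

lemma exists_next_mem_presentsAll (hreg : M.toJstitFrame.Regular) {m : Mo} {h : Set Mo}
    {ts : List (Pol PVar PConst)} (hh : h ∈ M.H m) (hts : ∀ t ∈ ts, t ∈ M.act m h)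
    {t0 : Pol PVar PConst} {g0 : Set Mo} (ht0 : t0 ∈ ts) (hg0 : g0 ∈ M.H m)
    (ht0g0 : t0 ∉ M.act m g0) : ∃ m2 ∈ h, M.Next m m2 ∧ m2 ∈ M.presentsAll ts := by
  have presented_above : ∀ m0 ∈ h, M.lt m m0 → m0 ∈ M.presentsAll ts :=
    fun m0 hm0 hlt t ht => M.mem_ActM_of_lt hlt ⟨hh.1, hm0⟩ (hts t ht)
  by_cases hsucc : ∃ m1 ∈ h, M.lt m m1
  · obtain ⟨m1, hm1, hlt⟩ := hsucc
    have hdiv : ¬ M.Undiv m g0 h := fun hu => ht0g0 (M.divide m g0 h hg0 hh hu ▸ hts t0 ht0)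
    obtain ⟨m2, hle2, hnx⟩ := hreg m m1 hlt ⟨M.presentsAll ts,
      fun m0 hlt0 hle0 => presentsAll_mem_Theta (List.ne_nil_of_mem ht0)
        (presented_above m0 (hh.1.mem_of_le hm1 hle0) hlt0),
      fun hm => ht0g0 (hm t0 ht0 g0 hg0),
      g0, hg0, fun g hg hu => hdiv (hu.trans hg0.1 hg.1 hh.1 ⟨m1, hlt, hg.2, hm1⟩),
      fun m' hm' hnx hm'S => ht0g0 (M.mem_act_of_next hg0 hnx hm' (hm'S t0 ht0))⟩
    have hm2 : m2 ∈ h := hh.1.mem_of_le hm1 hle2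
    exact ⟨m2, hm2, hnx, presented_above m2 hm2 hnx.1⟩
  · push Not at hsucc
    exact absurd (TemporalFrame.eq_of_forall_not_lt hh hsucc hg0 ▸ hts t0 ht0) ht0g0

lemma sat_bigOr_neg_ann_append_ann [Inhabited PropVar] {ts ss : List (Pol PVar PConst)} :
    M.Sat (bigOr ((ts.map fun t => Form.neg (Form.ann t)) ++ ss.map fun s => Form.ann s)) m h ↔
      (∃ t ∈ ts, t ∉ M.act m h) ∨ ∃ s ∈ ss, s ∈ M.act m h := by
  simp [sat_bigOr, or_and_right, exists_or, Sat]

lemma sat_bigOr_neg_box_ann_append_box_ann [Inhabited PropVar] {ts ss : List (Pol PVar PConst)} :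
    M.Sat (bigOr ((ts.map fun t => Form.neg (Form.box (Form.ann t))) ++
        ss.map fun s => Form.box (Form.ann s))) m h ↔
      (∃ t ∈ ts, t ∉ M.ActM m) ∨ ∃ s ∈ ss, s ∈ M.ActM m := by
  simp [sat_bigOr, or_and_right, exists_or, Sat, ActM]

lemma valid_rd [Inhabited PropVar] (hreg : M.toJstitFrame.Regular)
    {A : Form Ag PVar PConst PropVar} {ts ss : List (Pol PVar PConst)}
    (hprem : M.Valid (Form.imp (Form.know A)
      (bigOr ((ts.map fun t => Form.neg (Form.box (Form.ann t))) ++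
              (ss.map fun s => Form.box (Form.ann s)))))) :
    M.Valid (Form.imp (Form.know A)
      (bigOr ((ts.map fun t => Form.neg (Form.ann t)) ++ (ss.map fun s => Form.ann s)))) := by
  intro m h hh
  rw [sat_imp, sat_bigOr_neg_ann_append_ann]
  intro hK
  by_contra! hcon
  obtain ⟨hts, hss⟩ := hcon
  have premise : ∀ m2 h2, M.R m m2 → h2 ∈ M.H m2 →
      (∃ t ∈ ts, t ∉ M.ActM m2) ∨ ∃ s ∈ ss, s ∈ M.ActM m2 := fun m2 h2 hR hh2 =>
    sat_bigOr_neg_box_ann_append_box_ann.1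
      (sat_imp.1 (hprem m2 h2 hh2) fun m3 h3 hR' => hK m3 h3 (M.R_trans hR hR'))
  obtain ⟨t0, ht0, g0, hg0, ht0g0⟩ : ∃ t ∈ ts, ∃ g ∈ M.H m, t ∉ M.act m g := by
    rcases premise m h (M.R_refl m) hh with ⟨t, ht, hnt⟩ | ⟨s, hs, hsm⟩
    · simp only [ActM, Set.mem_ofPred_eq, not_forall] at hnt
      obtain ⟨g, hg, htg⟩ := hnt
      exact ⟨t, ht, g, hg, htg⟩
    · exact absurd (hsm h hh) (hss s hs)
  obtain ⟨m2, hm2, hnx, hm2S⟩ := exists_next_mem_presentsAll hreg hh hts ht0 hg0 ht0g0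
  rcases premise m2 h (M.le_sub_R hnx.1.1) ⟨hh.1, hm2⟩ with ⟨t, ht, hnt⟩ | ⟨s, hs, hsm⟩
  · exact hnt (hm2S t ht)
  · exact hss s hs (M.mem_act_of_next hh hnx hm2 hsm)

lemma sat_proves_of_valid {t : Pol PVar PConst} {B : Form Ag PVar PConst PropVar}
    (hB : M.Valid B) (hev : B ∈ M.ev m t) : M.Sat (Form.proves t B) m h :=
  ⟨hev, fun m' h' _ hh' => hB m' h' hh'⟩

lemma valid_of_mem_constSpec {CS : Set (Form Ag PVar PConst PropVar)} (hCS : IsConstSpec CS)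
    (hnorm : CSNormal CS M) {B : Form Ag PVar PConst PropVar} (hB : B ∈ CS) : M.Valid B := by
  induction hCS.1 B hB with
  | @base c A hA =>
    exact fun m _ _ => sat_proves_of_valid (fun _ _ hh' => sat_of_ax hA hh') (hnorm c m A hB)
  | @step c B hB' ih =>
    obtain ⟨c', B', rfl⟩ : ∃ c' B', B = Form.proves (Pol.const c') B' := by
      cases hB' <;> exact ⟨_, _, rfl⟩
    exact fun m _ _ => sat_proves_of_valid (ih (hCS.2 c c' B' hB)) (hnorm c m _ hB)

end JstitModel

theorem stmt13_general {Ag PVar PConst PropVar : Type} [Inhabited PropVar]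
    (CS : Set (Form Ag PVar PConst PropVar)) (hCS : IsConstSpec CS)
    (A : Form Ag PVar PConst PropVar) (hA : Proves CS A) :
    ∀ (Mo : Type) (M : JstitModel Mo Ag PVar PConst PropVar),
      M.toJstitFrame.Regular → CSNormal CS M → M.Valid A := by
  intro Mo M hreg hnorm
  induction hA with
  | ax hAx => exact fun _ _ hh => JstitModel.sat_of_ax hAx hh
  | mp _ _ ihImp ih => exact fun m h hh => JstitModel.sat_imp.1 (ihImp m h hh) (ih m h hh)
  | nec _ ih => exact fun _ _ _ m' h' _ hh' => ih m' h' hh'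
  | rd _ _ ih => exact JstitModel.valid_rd hreg ih
  | rcs hB => exact JstitModel.valid_of_mem_constSpec hCS hnorm hB

/-- Theorem 5, soundness: every theorem of Σ_D(CS) is valid in every
CS-normal jstit model based on a regular jstit frame for Ag. -/
theorem stmt13 {Ag PVar PConst PropVar : Type} [Finite Ag]
    [Countable PVar] [Infinite PVar] [Countable PConst] [Infinite PConst]
    [Countable PropVar] [Infinite PropVar] [Inhabited PropVar]
    (CS : Set (Form Ag PVar PConst PropVar)) (hCS : IsConstSpec CS)
    (A : Form Ag PVar PConst PropVar) (hA : Proves CS A) :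
    ∀ (Mo : Type) (M : JstitModel Mo Ag PVar PConst PropVar),
      M.toJstitFrame.Regular → CSNormal CS M → M.Valid A :=
  stmt13_general CS hCS A hA
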